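/- arXiv:2103.16723 — 2 statements merged into one kernel-verified Lean document; each statement's English description precedes it below -/
import Mathlib

section
/- If S is a numerical semigroup with concentration C(S) = 2 and multiplicity m, then S ∪ {F(S)} is a numerical semigroup with multiplicity m whose concentration is at most 2, where F(S) is the Frobenius number of S. -/
open Set

/-- A numerical semigroup: contains 0, closed under addition, finite complement. -/
def IsNumSgp (S : Set ℕ) : Prop :=
  0 ∈ S ∧ (∀ a ∈ S, ∀ b ∈ S, a + b ∈ S) ∧ (Sᶜ : Set ℕ).Finite

/-- The multiplicity: least positive element. -/
noncomputable def mult (S : Set ℕ) : ℕ := sInf {n | n ∈ S ∧ n ≠ 0}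

/-- next_S(s) = min { x ∈ S | s < x }. -/
noncomputable def nextS (S : Set ℕ) (s : ℕ) : ℕ := sInf {x | x ∈ S ∧ s < x}

/-- The concentration C(S) = max { next_S(s) - s | s ∈ S \ {0} }. -/
noncomputable def conc (S : Set ℕ) : ℕ :=
  sSup {d | ∃ s ∈ S, s ≠ 0 ∧ d = nextS S s - s}

/-- The Frobenius number: largest gap. -/
noncomputable def frob (S : Set ℕ) : ℕ := sSup (Sᶜ : Set ℕ)

/-- The genus: number of gaps. -/
noncomputable def genus (S : Set ℕ) : ℕ := (Sᶜ : Set ℕ).ncard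

/-- x is a minimal generator of S. -/
def IsMinGen (S : Set ℕ) (x : ℕ) : Prop :=
  x ∈ S ∧ x ≠ 0 ∧ ¬∃ a ∈ S, ∃ b ∈ S, a ≠ 0 ∧ b ≠ 0 ∧ a + b = x

/-- The embedding dimension: number of minimal generators. -/
noncomputable def edim (S : Set ℕ) : ℕ := {x | IsMinGen S x}.ncard

/-- n(S): the number of elements of S smaller than the Frobenius number. -/
noncomputable def nS (S : Set ℕ) : ℕ := {s | s ∈ S ∧ s < frob S}.ncard

/-- The half-line Δ(m) = {0} ∪ {m, m+1, ...}. -/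
def Delta (m : ℕ) : Set ℕ := {0} ∪ {n | m ≤ n}

def IsHalfLine (S : Set ℕ) : Prop := ∃ m, S = Delta m

/-- An irreducible numerical semigroup. -/
def Irred (S : Set ℕ) : Prop :=
  ¬∃ T₁ T₂ : Set ℕ, IsNumSgp T₁ ∧ IsNumSgp T₂ ∧ S ⊂ T₁ ∧ S ⊂ T₂ ∧ S = T₁ ∩ T₂

/-!
Every integer above `F = F(S)` lies in `S`, so adjoining `F` keeps `S` closed under addition;
adjoining an element can only lower `next(s) - s`, and at the new element `F` it equals `1`.
The multiplicity is unchanged as long as `m ≤ F`, and if `F < m` then `S = {0} ∪ [m, ∞)`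
has concentration at most `1`.
-/

theorem nextS_le {S : Set ℕ} {s x : ℕ} (hx : x ∈ S) (hsx : s < x) : nextS S s ≤ x :=
  Nat.sInf_le ⟨hx, hsx⟩

theorem mult_le {S : Set ℕ} {n : ℕ} (hn : n ∈ S) (hn0 : n ≠ 0) : mult S ≤ n :=
  Nat.sInf_le (s := {n | n ∈ S ∧ n ≠ 0}) ⟨hn, hn0⟩

theorem mult_union_singleton_of_mult_le {S : Set ℕ} {x : ℕ} (hpos : ∃ n ∈ S, n ≠ 0)
    (hx : mult S ≤ x) : mult (S ∪ {x}) = mult S := by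
  obtain ⟨n, hn, hn0⟩ := hpos
  obtain ⟨hmS, hm0⟩ : mult S ∈ S ∧ mult S ≠ 0 :=
    Nat.sInf_mem (s := {n | n ∈ S ∧ n ≠ 0}) ⟨n, hn, hn0⟩
  refine le_antisymm (mult_le (Or.inl hmS) hm0) (le_csInf ⟨_, Or.inl hmS, hm0⟩ ?_)
  rintro n ⟨hn | rfl, hn0⟩
  · exact mult_le hn hn0
  · exact hx

theorem conc_le_one_of_add_one_mem {S : Set ℕ} (h : ∀ s ∈ S, s ≠ 0 → s + 1 ∈ S) :
    conc S ≤ 1 := by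
  refine csSup_le' ?_
  rintro d ⟨s, hs, hs0, rfl⟩
  have := nextS_le (h s hs hs0) (Nat.lt_succ_self s)
  omega

namespace IsNumSgp

variable {S : Set ℕ}

theorem mem_of_frob_lt (hS : IsNumSgp S) {x : ℕ} (hx : frob S < x) : x ∈ S := by
  by_contra hxS
  exact (le_csSup hS.2.2.bddAbove hxS).not_gt hx

theorem exists_ne_zero (hS : IsNumSgp S) : ∃ n ∈ S, n ≠ 0 :=
  ⟨frob S + 1, hS.mem_of_frob_lt (Nat.lt_succ_self _), Nat.succ_ne_zero _⟩

theorem nextS_mem (hS : IsNumSgp S) (s : ℕ) : nextS S s ∈ S ∧ s < nextS S s :=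
  Nat.sInf_mem (s := {x | x ∈ S ∧ s < x})
    ⟨s + frob S + 1, hS.mem_of_frob_lt (by omega), by omega⟩

theorem le_conc (hS : IsNumSgp S) {s : ℕ} (hs : s ∈ S) (hs0 : s ≠ 0) :
    nextS S s - s ≤ conc S := by
  refine le_csSup ⟨frob S + 1, ?_⟩ ⟨s, hs, hs0, rfl⟩
  rintro d ⟨t, ht, ht0, rfl⟩
  have : nextS S t ≤ t + frob S + 1 := nextS_le (hS.mem_of_frob_lt (by omega)) (by omega)
  omega

theorem mult_le_frob_of_one_lt_conc (hS : IsNumSgp S) (hC : 1 < conc S) : mult S ≤ frob S := by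
  by_contra! hF
  have := conc_le_one_of_add_one_mem fun s hs hs0 ↦
    hS.mem_of_frob_lt (hF.trans_le ((mult_le hs hs0).trans (Nat.le_succ s)))
  omega

theorem union_frob (hS : IsNumSgp S) : IsNumSgp (S ∪ {frob S}) := by
  have add_frob : ∀ a ∈ S ∪ {frob S}, a + frob S ∈ S ∪ {frob S} := by
    rintro a (ha | rfl)
    · rcases Nat.eq_zero_or_pos a with rfl | ha0
      · simp
      · exact Or.inl (hS.mem_of_frob_lt (by omega))
    · rcases Nat.eq_zero_or_pos (frob S) with h | h
      · simp [h]
      · exact Or.inl (hS.mem_of_frob_lt (by omega))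
  refine ⟨Or.inl hS.1, ?_, hS.2.2.subset fun x hx hxS ↦ hx (Or.inl hxS)⟩
  rintro a ha b (hb | rfl)
  · rcases ha with ha | rfl
    · exact Or.inl (hS.2.1 a ha b hb)
    · rw [add_comm]; exact add_frob b (Or.inl hb)
  · exact add_frob a ha

theorem conc_union_frob_le (hS : IsNumSgp S) : conc (S ∪ {frob S}) ≤ max (conc S) 1 := by
  refine csSup_le' ?_
  rintro d ⟨s, hs | rfl, hs0, rfl⟩
  · have hnext := hS.nextS_mem s
    have := nextS_le (S := S ∪ {frob S}) (Or.inl hnext.1) hnext.2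
    have := hS.le_conc hs hs0
    omega
  · have := nextS_le (S := S ∪ {frob S}) (Or.inl (hS.mem_of_frob_lt (Nat.lt_succ_self _)))
      (Nat.lt_succ_self (frob S))
    omega

end IsNumSgp

theorem stmt4 (S : Set ℕ) (m : ℕ) (hS : IsNumSgp S) (hC : conc S = 2)
    (hm : mult S = m) :
    IsNumSgp (S ∪ {frob S}) ∧ mult (S ∪ {frob S}) = m ∧ conc (S ∪ {frob S}) ≤ 2 := by
  subst hm
  refine ⟨hS.union_frob, ?_, ?_⟩
  · exact mult_union_singleton_of_mult_le hS.exists_ne_zero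
      (hS.mult_le_frob_of_one_lt_conc (by omega))
  · simpa [hC] using hS.conc_union_frob_le
end

section
/- If m ≥ 2 and S is a numerical semigroup with concentration 2 and multiplicity m, then the genus of S satisfies g(S) ≥ m. -/
open Set

/-!
If `C(S) ≥ 2`, some nonzero `s ∈ S` is followed by the gap `s + 1`. Since `s ≥ m(S)`, this gap
lies beyond the `m(S) - 1` gaps `1, …, m(S) - 1`, so `S` has at least `m(S)` gaps.
-/

section NumericalSemigroup

variable {S : Set ℕ}

lemma mult_le_of_mem {s : ℕ} (hs : s ∈ S) (hs0 : s ≠ 0) : mult S ≤ s :=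
  Nat.sInf_le ⟨hs, hs0⟩

lemma mult_ne_zero_of_mem {s : ℕ} (hs : s ∈ S) (hs0 : s ≠ 0) : mult S ≠ 0 :=
  (Nat.sInf_mem (s := {n | n ∈ S ∧ n ≠ 0}) ⟨s, hs, hs0⟩).2

lemma Ico_one_mult_subset_compl : Ico 1 (mult S) ⊆ Sᶜ := fun k ⟨hk1, hkm⟩ hk =>
  (mult_le_of_mem hk (by omega)).not_gt hkm

lemma notMem_of_lt_nextS {s x : ℕ} (hsx : s < x) (hx : x < nextS S s) : x ∉ S := fun hxS =>
  (Nat.sInf_le (show x ∈ {y | y ∈ S ∧ s < y} from ⟨hxS, hsx⟩)).not_gt hx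

variable (hfin : (Sᶜ : Set ℕ).Finite)
include hfin

lemma mem_of_frob_lt {n : ℕ} (hn : frob S < n) : n ∈ S := by
  by_contra hnS
  exact (le_csSup hfin.bddAbove hnS).not_gt hn

lemma nextS_sub_le (s : ℕ) : nextS S s - s ≤ frob S + 1 := by
  have : nextS S s ≤ s + frob S + 1 := Nat.sInf_le ⟨mem_of_frob_lt hfin (by omega), by omega⟩
  omega

lemma exists_nextS_sub_eq_conc : ∃ s ∈ S, s ≠ 0 ∧ nextS S s - s = conc S := by
  have hne : {d | ∃ s ∈ S, s ≠ 0 ∧ d = nextS S s - s}.Nonempty :=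
    ⟨_, frob S + 1, mem_of_frob_lt hfin (Nat.lt_succ_self _), Nat.succ_ne_zero _, rfl⟩
  have hbdd : BddAbove {d | ∃ s ∈ S, s ≠ 0 ∧ d = nextS S s - s} :=
    ⟨frob S + 1, by rintro d ⟨s, -, -, rfl⟩; exact nextS_sub_le hfin s⟩
  obtain ⟨s, hs, hs0, hconc⟩ := Nat.sSup_mem hne hbdd
  exact ⟨s, hs, hs0, hconc.symm⟩

theorem mult_le_genus_of_one_lt_conc (hC : 1 < conc S) : mult S ≤ genus S := by
  obtain ⟨s, hs, hs0, hconc⟩ := exists_nextS_sub_eq_conc hfin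
  have hgap : s + 1 ∉ S := notMem_of_lt_nextS (Nat.lt_succ_self s) (by omega)
  have hsm : mult S < s + 1 := Nat.lt_succ_of_le (mult_le_of_mem hs hs0)
  have hsub : insert (s + 1) (Ico 1 (mult S)) ⊆ Sᶜ :=
    insert_subset hgap Ico_one_mult_subset_compl
  calc mult S = (insert (s + 1) (Ico 1 (mult S))).ncard := by
        rw [ncard_insert_of_notMem (fun h => h.2.not_gt hsm) (finite_Ico _ _), ncard_Ico_nat]
        have := mult_ne_zero_of_mem hs hs0
        omega
    _ ≤ genus S := ncard_le_ncard hsub hfin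

end NumericalSemigroup

theorem stmt8_general (S : Set ℕ) (m : ℕ) (hS : IsNumSgp S)
    (hC : conc S = 2) (hmult : mult S = m) :
    m ≤ genus S :=
  hmult ▸ mult_le_genus_of_one_lt_conc hS.2.2 (by omega)

theorem stmt8 (S : Set ℕ) (m : ℕ) (hm : 2 ≤ m) (hS : IsNumSgp S)
    (hC : conc S = 2) (hmult : mult S = m) :
    m ≤ genus S :=
  stmt8_general S m hS hC hmult
end
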